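/- Let Θ ∈ ℝ^{p×p} be symmetric positive definite and diagonally dominant with ratio ρ: Σ_{j'≠j} |Θ_{j'j}| ≤ ρ·Θ_{jj} for every j, where 0 ≤ ρ < 1. Let α ≥ 0, let Λ = diag(τ₁,…,τ_n) with all τ_i ≥ 0, and let R ∈ ℝ^{n×p}. Suppose W₂ ∈ ℝ^{n×p} satisfies W₂Θ + αΛW₂ = R, and define W₃ = (I + αΛ)^{−1}R, i.e., W₃_{ij} = R_{ij}/(1 + ατ_i). Then (1 − ρ)·min(1, min_j Θ_{jj})·‖W₂‖_∞ ≤ ‖W₃‖_∞ ≤ (1 + ρ)·max(1, max_j Θ_{jj})·‖W₂‖_∞. -/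

import Mathlib

open Matrix Finset

/-- The maximum absolute entry norm `‖M‖_∞ = max_{ij} |M_{ij}|` of a matrix. -/
noncomputable def maxAbsEntry {n p : ℕ} (M : Matrix (Fin n) (Fin p) ℝ) : ℝ :=
  ⨆ i, ⨆ j, |M i j|

/-! Write `D = diag Θ + αΛ`, so that row `i`, column `j` of `W₂Θ + αΛW₂` is
`D_{ij} (W₂)_{ij}` plus an off-diagonal sum which, by diagonal dominance, is at most
`ρ Θ_{jj} ‖W₂‖_∞` in absolute value. Dividing by `1 + ατ_i` gives the upper bound at every
entry; evaluating at an entry where `|(W₂)_{ij}| = ‖W₂‖_∞` gives the lower bound. -/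

section maxAbsEntry

variable {n p : ℕ} (M : Matrix (Fin n) (Fin p) ℝ)

lemma abs_le_maxAbsEntry (i : Fin n) (j : Fin p) : |M i j| ≤ maxAbsEntry M :=
  (le_ciSup (f := fun j => |M i j|) (Set.finite_range _).bddAbove j).trans
    (le_ciSup (f := fun i => ⨆ j, |M i j|) (Set.finite_range _).bddAbove i)

lemma maxAbsEntry_nonneg : 0 ≤ maxAbsEntry M :=
  Real.iSup_nonneg fun _ => Real.iSup_nonneg fun _ => abs_nonneg _

lemma maxAbsEntry_le {c : ℝ} (h : ∀ i j, |M i j| ≤ c) (hc : 0 ≤ c) : maxAbsEntry M ≤ c :=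
  Real.iSup_le (fun i => Real.iSup_le (h i) hc) hc

lemma exists_abs_eq_maxAbsEntry (hM : maxAbsEntry M ≠ 0) :
    ∃ i j, |M i j| = maxAbsEntry M := by
  have : Nonempty (Fin n) := by
    by_contra hn
    rw [not_nonempty_iff] at hn
    exact hM (Real.iSup_of_isEmpty _)
  have : Nonempty (Fin p) := by
    by_contra hp
    rw [not_nonempty_iff] at hp
    simp [maxAbsEntry] at hM
  obtain ⟨i, hi⟩ := exists_eq_ciSup_of_finite (f := fun i => ⨆ j, |M i j|)
  obtain ⟨j, hj⟩ := exists_eq_ciSup_of_finite (f := fun j => |M i j|)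
  exact ⟨i, j, hj.trans hi⟩

end maxAbsEntry

section DiagonallyDominant

variable {ι κ : Type*} [Fintype ι] [DecidableEq ι] [Fintype κ] [DecidableEq κ]

lemma mul_add_smul_diagonal_mul_apply (W : Matrix ι κ ℝ) (Θ : Matrix κ κ ℝ) (α : ℝ)
    (τ : ι → ℝ) (i : ι) (j : κ) :
    (W * Θ + α • (diagonal τ * W)) i j =
      (Θ j j + α * τ i) * W i j + ∑ k ∈ univ.erase j, W i k * Θ k j := by
  rw [Matrix.add_apply, Matrix.mul_apply, ← Finset.add_sum_erase _ _ (mem_univ j),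
    Matrix.smul_apply, diagonal_mul, smul_eq_mul]
  ring

lemma abs_sum_erase_mul_le {Θ : Matrix κ κ ℝ} {ρ m : ℝ} {w : κ → ℝ} {j : κ}
    (hdom : ∑ k ∈ univ.erase j, |Θ k j| ≤ ρ * Θ j j) (hw : ∀ k, |w k| ≤ m) :
    |∑ k ∈ univ.erase j, w k * Θ k j| ≤ ρ * Θ j j * m := by
  have hm : 0 ≤ m := (abs_nonneg _).trans (hw j)
  calc |∑ k ∈ univ.erase j, w k * Θ k j|
      ≤ ∑ k ∈ univ.erase j, m * |Θ k j| := by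
        refine (abs_sum_le_sum_abs _ _).trans (sum_le_sum fun k _ => ?_)
        rw [abs_mul]
        exact mul_le_mul_of_nonneg_right (hw k) (abs_nonneg _)
    _ ≤ ρ * Θ j j * m := by
        rw [← mul_sum, mul_comm _ m]
        exact mul_le_mul_of_nonneg_left hdom hm

variable {W : Matrix ι κ ℝ} {Θ : Matrix κ κ ℝ} {α ρ m : ℝ} {τ : ι → ℝ}
  {i : ι} {j : κ}

lemma abs_mul_add_smul_diagonal_mul_apply_le
    (hdom : ∑ k ∈ univ.erase j, |Θ k j| ≤ ρ * Θ j j) (hΘ : 0 ≤ Θ j j) (hατ : 0 ≤ α * τ i)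
    (hW : ∀ k, |W i k| ≤ m) :
    |(W * Θ + α • (diagonal τ * W)) i j| ≤ ((1 + ρ) * Θ j j + α * τ i) * m := by
  rw [mul_add_smul_diagonal_mul_apply]
  have hdiag : |(Θ j j + α * τ i) * W i j| ≤ (Θ j j + α * τ i) * m := by
    rw [abs_mul, abs_of_nonneg (add_nonneg hΘ hατ)]
    exact mul_le_mul_of_nonneg_left (hW j) (add_nonneg hΘ hατ)
  linarith [abs_add_le ((Θ j j + α * τ i) * W i j) (∑ k ∈ univ.erase j, W i k * Θ k j),
    abs_sum_erase_mul_le hdom hW]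

lemma le_abs_mul_add_smul_diagonal_mul_apply
    (hdom : ∑ k ∈ univ.erase j, |Θ k j| ≤ ρ * Θ j j) (hmax : ∀ k, |W i k| ≤ |W i j|) :
    ((1 - ρ) * Θ j j + α * τ i) * |W i j| ≤ |(W * Θ + α • (diagonal τ * W)) i j| := by
  rw [mul_add_smul_diagonal_mul_apply]
  have hdiag : (Θ j j + α * τ i) * |W i j| ≤ |(Θ j j + α * τ i) * W i j| := by
    rw [abs_mul]
    exact mul_le_mul_of_nonneg_right (le_abs_self _) (abs_nonneg _)
  linarith [abs_sub_abs_le_abs_add ((Θ j j + α * τ i) * W i j)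
      (∑ k ∈ univ.erase j, W i k * Θ k j),
    abs_sum_erase_mul_le hdom hmax]

lemma abs_mul_add_smul_diagonal_mul_apply_div_le {S : ℝ}
    (hdom : ∑ k ∈ univ.erase j, |Θ k j| ≤ ρ * Θ j j) (hρ : 0 ≤ ρ) (hΘ : 0 ≤ Θ j j)
    (hΘS : Θ j j ≤ S) (hS : 1 ≤ S) (hατ : 0 ≤ α * τ i) (hW : ∀ k, |W i k| ≤ m) :
    |(W * Θ + α • (diagonal τ * W)) i j / (1 + α * τ i)| ≤ (1 + ρ) * S * m := by
  have hm : 0 ≤ m := (abs_nonneg _).trans (hW j)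
  have hcoef : (1 + ρ) * Θ j j + α * τ i ≤ (1 + ρ) * S * (1 + α * τ i) := by
    nlinarith [mul_nonneg (by linarith : 0 ≤ 1 + ρ) (sub_nonneg.2 hΘS),
      mul_nonneg hατ (sub_nonneg.2 hS), mul_nonneg (mul_nonneg hατ hρ) (by linarith : 0 ≤ S)]
  rw [abs_div, abs_of_pos (a := 1 + α * τ i) (by linarith), div_le_iff₀ (by linarith)]
  linarith [abs_mul_add_smul_diagonal_mul_apply_le hdom hΘ hατ hW,
    mul_le_mul_of_nonneg_right hcoef hm]

lemma le_abs_mul_add_smul_diagonal_mul_apply_div {c : ℝ}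
    (hdom : ∑ k ∈ univ.erase j, |Θ k j| ≤ ρ * Θ j j) (hρ₀ : 0 ≤ ρ) (hρ₁ : ρ ≤ 1)
    (hc : c ≤ 1) (hcΘ : c ≤ Θ j j) (hατ : 0 ≤ α * τ i) (hmax : ∀ k, |W i k| ≤ |W i j|) :
    (1 - ρ) * c * |W i j| ≤ |(W * Θ + α • (diagonal τ * W)) i j / (1 + α * τ i)| := by
  have hcoef : (1 - ρ) * c * (1 + α * τ i) ≤ (1 - ρ) * Θ j j + α * τ i := by
    nlinarith [mul_nonneg (sub_nonneg.2 hρ₁) (sub_nonneg.2 hcΘ),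
      mul_nonneg hατ (mul_nonneg (sub_nonneg.2 hρ₁) (sub_nonneg.2 hc)), mul_nonneg hατ hρ₀]
  rw [abs_div, abs_of_pos (a := 1 + α * τ i) (by linarith), le_div_iff₀ (by linarith)]
  linarith [le_abs_mul_add_smul_diagonal_mul_apply (α := α) (τ := τ) hdom hmax,
    mul_le_mul_of_nonneg_right hcoef (abs_nonneg (W i j))]

end DiagonallyDominant

theorem weighted_vs_unweighted_smoothing_error_general
    (n p : ℕ)
    (Θ : Matrix (Fin p) (Fin p) ℝ) (hΘ : Θ.PosDef)
    (ρ : ℝ) (hρ₀ : 0 ≤ ρ) (hρ₁ : ρ < 1)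
    (hdom : ∀ j, ∑ j' ∈ Finset.univ.erase j, |Θ j' j| ≤ ρ * Θ j j)
    (α : ℝ) (hα : 0 ≤ α) (τ : Fin n → ℝ) (hτ : ∀ i, 0 ≤ τ i)
    (R : Matrix (Fin n) (Fin p) ℝ)
    (W₂ : Matrix (Fin n) (Fin p) ℝ)
    (hW₂ : W₂ * Θ + α • (Matrix.diagonal τ * W₂) = R) :
    let W₃ : Matrix (Fin n) (Fin p) ℝ := Matrix.of fun i j => R i j / (1 + α * τ i)
    (1 - ρ) * min 1 (⨅ j, Θ j j) * maxAbsEntry W₂ ≤ maxAbsEntry W₃ ∧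
      maxAbsEntry W₃ ≤ (1 + ρ) * max 1 (⨆ j, Θ j j) * maxAbsEntry W₂ := by
  intro W₃
  subst hW₂
  have hατ i : 0 ≤ α * τ i := mul_nonneg hα (hτ i)
  constructor
  · rcases eq_or_ne (maxAbsEntry W₂) 0 with hzero | hne
    · simpa [hzero] using maxAbsEntry_nonneg W₃
    obtain ⟨i, j, hij⟩ := exists_abs_eq_maxAbsEntry W₂ hne
    have hcΘ : min 1 (⨅ j, Θ j j) ≤ Θ j j :=
      (min_le_right _ _).trans (ciInf_le (Set.finite_range _).bddBelow j)
    rw [← hij]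
    exact (le_abs_mul_add_smul_diagonal_mul_apply_div (hdom j) hρ₀ hρ₁.le (min_le_left _ _) hcΘ
      (hατ i) fun k => hij ▸ abs_le_maxAbsEntry W₂ i k).trans (abs_le_maxAbsEntry W₃ i j)
  · have hS : 1 ≤ max 1 (⨆ j, Θ j j) := le_max_left _ _
    refine maxAbsEntry_le W₃ (fun i j => ?_)
      (mul_nonneg (mul_nonneg (by linarith) (by linarith)) (maxAbsEntry_nonneg W₂))
    have hΘS : Θ j j ≤ max 1 (⨆ j, Θ j j) :=
      (le_ciSup (f := fun j => Θ j j) (Set.finite_range _).bddAbove j).trans (le_max_right _ _)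
    exact abs_mul_add_smul_diagonal_mul_apply_div_le (hdom j) hρ₀ hΘ.diag_pos.le hΘS hS (hατ i)
      fun k => abs_le_maxAbsEntry W₂ i k

theorem weighted_vs_unweighted_smoothing_error
    (n p : ℕ) (hn : 0 < n) (hp : 0 < p)
    (Θ : Matrix (Fin p) (Fin p) ℝ) (hΘ : Θ.PosDef)
    (ρ : ℝ) (hρ₀ : 0 ≤ ρ) (hρ₁ : ρ < 1)
    (hdom : ∀ j, ∑ j' ∈ Finset.univ.erase j, |Θ j' j| ≤ ρ * Θ j j)
    (α : ℝ) (hα : 0 ≤ α) (τ : Fin n → ℝ) (hτ : ∀ i, 0 ≤ τ i)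
    (R : Matrix (Fin n) (Fin p) ℝ)
    (W₂ : Matrix (Fin n) (Fin p) ℝ)
    (hW₂ : W₂ * Θ + α • (Matrix.diagonal τ * W₂) = R) :
    let W₃ : Matrix (Fin n) (Fin p) ℝ := Matrix.of fun i j => R i j / (1 + α * τ i)
    (1 - ρ) * min 1 (⨅ j, Θ j j) * maxAbsEntry W₂ ≤ maxAbsEntry W₃ ∧
      maxAbsEntry W₃ ≤ (1 + ρ) * max 1 (⨆ j, Θ j j) * maxAbsEntry W₂ :=
  weighted_vs_unweighted_smoothing_error_general n p Θ hΘ ρ hρ₀ hρ₁ hdom α hα τ hτ R W₂ hW₂
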